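/- For all κ₁, κ₂ ∈ ℂ, the deformed bracket on pairs (f,u) of functions in C∞₂π(ℝ,ℂ), defined by [(f,u),(g,v)]_{κ₁,κ₂} = ( f·g′ − f′·g , f·v′ + 2·f′·v − g·u′ − 2·g′·u + κ₁·(f‴·g − f·g‴) + κ₂·(f‴·g′ − f′·g‴) ), is bilinear, alternating and satisfies the Jacobi identity. Equivalently, ρ₁(f,g) = f‴·g − f·g‴ and ρ₂(f,g) = f‴·g′ − f′·g‴ are 2-cocycles on Vect(S¹) with values in the module F₂ of quadratic differentials, and they define a 2-parameter family of Lie algebra deformations of Vect(S¹) ⋉ F₂. -/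
import Mathlib


open Real
open scoped ContDiff

noncomputable section

/-- `C∞₂π(ℝ,ℂ)`: smooth `2π`-periodic functions `ℝ → ℂ`. -/
def SmoothPer (f : ℝ → ℂ) : Prop := ContDiff ℝ ∞ f ∧ Function.Periodic f (2 * π)

/-- Membership in `Vect(S¹) ⋉ F₂`: a pair `(f,u)` of functions in `C∞₂π(ℝ,ℂ)`,
`f` representing the vector field `f·d/dx` and `u` the quadratic differential `u·dx²`. -/
def MemSD (a : (ℝ → ℂ) × (ℝ → ℂ)) : Prop := SmoothPer a.1 ∧ SmoothPer a.2

/-- The deformed bracket `[·,·]_{κ₁,κ₂}` on `Vect(S¹) ⋉ F₂`: the undeformed bracket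
plus `κ₁·ρ₁(f,g) + κ₂·ρ₂(f,g)` with `ρ₁(f,g) = f‴·g − f·g‴`, `ρ₂(f,g) = f‴·g′ − f′·g‴`. -/
def defBracket (κ₁ κ₂ : ℂ) (a b : (ℝ → ℂ) × (ℝ → ℂ)) : (ℝ → ℂ) × (ℝ → ℂ) :=
  (fun x => a.1 x * deriv b.1 x - deriv a.1 x * b.1 x,
   fun x => a.1 x * deriv b.2 x + 2 * deriv a.1 x * b.2 x
     - b.1 x * deriv a.2 x - 2 * deriv b.1 x * a.2 x
     + κ₁ * (deriv (deriv (deriv a.1)) x * b.1 x - a.1 x * deriv (deriv (deriv b.1)) x)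
     + κ₂ * (deriv (deriv (deriv a.1)) x * deriv b.1 x
         - deriv a.1 x * deriv (deriv (deriv b.1)) x))

private lemma dS {f : ℝ → ℂ} (hf : ContDiff ℝ ∞ f) : ContDiff ℝ ∞ (deriv f) :=
  (contDiff_infty_iff_deriv.mp hf).2

private lemma Dadd {f g : ℝ → ℂ} (hf : ContDiff ℝ ∞ f) (hg : ContDiff ℝ ∞ g) :
    deriv (fun x => f x + g x) = fun x => deriv f x + deriv g x := by
  funext x
  exact deriv_add (hf.differentiable (by norm_num) x) (hg.differentiable (by norm_num) x)

private lemma Dsub {f g : ℝ → ℂ} (hf : ContDiff ℝ ∞ f) (hg : ContDiff ℝ ∞ g) :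
    deriv (fun x => f x - g x) = fun x => deriv f x - deriv g x := by
  funext x
  exact deriv_sub (hf.differentiable (by norm_num) x) (hg.differentiable (by norm_num) x)

private lemma Dconstmul (k : ℂ) {f : ℝ → ℂ} (hf : ContDiff ℝ ∞ f) :
    deriv (fun x => k * f x) = fun x => k * deriv f x := by
  funext x
  exact deriv_const_mul k (hf.differentiable (by norm_num) x)

private lemma Dmul {f g : ℝ → ℂ} (hf : ContDiff ℝ ∞ f) (hg : ContDiff ℝ ∞ g) :
    deriv (fun x => f x * g x) = fun x => deriv f x * g x + f x * deriv g x := by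
  funext x
  exact deriv_mul (hf.differentiable (by norm_num) x) (hg.differentiable (by norm_num) x)

set_option maxHeartbeats 4000000 in
/-- **The 2-parameter deformation of `Vect(S¹) ⋉ F₂` is a family of Lie algebras.**
For all `κ₁, κ₂ ∈ ℂ` the deformed bracket `[·,·]_{κ₁,κ₂}` is bilinear, alternating and
satisfies the Jacobi identity; equivalently `ρ₁(f,g) = f‴·g − f·g‴` and
`ρ₂(f,g) = f‴·g′ − f′·g‴` are 2-cocycles on `Vect(S¹)` with values in the module `F₂`
of quadratic differentials. -/
theorem deformed_bracket_is_lie_algebra (κ₁ κ₂ : ℂ) :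
    (∀ (c : ℂ) (a b d : (ℝ → ℂ) × (ℝ → ℂ)), MemSD a → MemSD b → MemSD d →
      defBracket κ₁ κ₂ (a + b) d = defBracket κ₁ κ₂ a d + defBracket κ₁ κ₂ b d ∧
      defBracket κ₁ κ₂ d (a + b) = defBracket κ₁ κ₂ d a + defBracket κ₁ κ₂ d b ∧
      defBracket κ₁ κ₂ (c • a) d = c • defBracket κ₁ κ₂ a d ∧
      defBracket κ₁ κ₂ d (c • a) = c • defBracket κ₁ κ₂ d a) ∧
    (∀ a : (ℝ → ℂ) × (ℝ → ℂ), defBracket κ₁ κ₂ a a = 0) ∧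
    (∀ a b d : (ℝ → ℂ) × (ℝ → ℂ), MemSD a → MemSD b → MemSD d →
      defBracket κ₁ κ₂ (defBracket κ₁ κ₂ a b) d
        + defBracket κ₁ κ₂ (defBracket κ₁ κ₂ b d) a
        + defBracket κ₁ κ₂ (defBracket κ₁ κ₂ d a) b = 0) := by
  refine ⟨?_, ?_, ?_⟩
  · intro c a b d ha hb hd
    obtain ⟨⟨ha1, -⟩, ⟨ha2, -⟩⟩ := ha
    obtain ⟨⟨hb1, -⟩, ⟨hb2, -⟩⟩ := hb
    obtain ⟨⟨hd1, -⟩, ⟨hd2, -⟩⟩ := hd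
    have ha1' := dS ha1; have ha1'' := dS ha1'; have ha1''' := dS ha1''
    have hb1' := dS hb1; have hb1'' := dS hb1'; have hb1''' := dS hb1''
    have hd1' := dS hd1; have hd1'' := dS hd1'; have hd1''' := dS hd1''
    have ha2' := dS ha2; have hb2' := dS hb2; have hd2' := dS hd2
    refine ⟨?_, ?_, ?_, ?_⟩ <;>
      refine Prod.ext ?_ ?_ <;> funext x <;>
      simp (disch := fun_prop) only [defBracket, Prod.fst_add, Prod.snd_add,
        Prod.smul_fst, Prod.smul_snd, Pi.add_def, Pi.smul_def, smul_eq_mul,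
        Pi.add_apply, Pi.smul_apply, Dadd, Dconstmul, Dsub, Dmul] <;>
      ring
  · intro a
    refine Prod.ext ?_ ?_ <;> funext x <;>
      simp only [defBracket, Prod.fst_zero, Prod.snd_zero, Pi.zero_apply] <;> ring
  · intro a b d ha hb hd
    obtain ⟨⟨ha1, -⟩, ⟨ha2, -⟩⟩ := ha
    obtain ⟨⟨hb1, -⟩, ⟨hb2, -⟩⟩ := hb
    obtain ⟨⟨hd1, -⟩, ⟨hd2, -⟩⟩ := hd
    have ha1' := dS ha1; have ha1'' := dS ha1'; have ha1''' := dS ha1''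
    have ha1'''' := dS ha1'''
    have hb1' := dS hb1; have hb1'' := dS hb1'; have hb1''' := dS hb1''
    have hb1'''' := dS hb1'''
    have hd1' := dS hd1; have hd1'' := dS hd1'; have hd1''' := dS hd1''
    have hd1'''' := dS hd1'''
    have ha2' := dS ha2; have ha2'' := dS ha2'
    have hb2' := dS hb2; have hb2'' := dS hb2'
    have hd2' := dS hd2; have hd2'' := dS hd2'
    refine Prod.ext ?_ ?_ <;> funext x <;>
      simp (disch := fun_prop) only [defBracket, Prod.fst_add, Prod.snd_add,
        Prod.fst_zero, Prod.snd_zero, Pi.zero_apply, Pi.add_apply,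
        Dadd, Dconstmul, Dsub, Dmul] <;>
      ring
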